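/- Under the same setup as the SGD convergence theorem, with the specific stepsize choice η = c_γ/K^{1/(1+γ)} where c_γ = (1/σ)·((1+γ)(f(w^0)−f_*)/(γM))^{1/(1+γ)}, we have min_{0 ≤ k ≤ K−1} E‖∇f(w^k)‖² ≤ a_γ/K^{γ/(1+γ)} where a_γ = σ·(((1+γ)/γ)M)^{1/(1+γ)}·(f(w^0)−f_*)^{γ/(1+γ)}. -/

import Mathlib

/-!
Hölder continuity of `∇f` gives the descent inequality
`f (x + v) ≤ f x + ⟪∇f x, v⟫ + M / (1 + γ) * ‖v‖ ^ (1 + γ)`; summed along an SGD path it telescopes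
to `η ∑ ⟪∇f wₖ, Gₖ⟫ ≤ f w⁰ - f_* + M η ^ (1 + γ) / (1 + γ) * ∑ ‖Gₖ‖ ^ (1 + γ)`. In expectation,
`∇f wₖ` is `ℱₖ`-measurable, so the pull-out property and unbiasedness turn `⟪∇f wₖ, Gₖ⟫` into
`‖∇f wₖ‖²`, while the conditional moment bound controls the noise term. The minimum is at most the
average; with the chosen stepsize this bound equals
`σ M ^ (1/(1+γ)) ((1+γ) Δ / γ) ^ (γ/(1+γ)) / K ^ (γ/(1+γ))`, and `γ ≤ 1` lets the factor
`((1+γ)/γ) ^ (γ/(1+γ))` be enlarged to `((1+γ)/γ) ^ (1/(1+γ))`.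

The pull-out property needs `⟪∇f wₖ, Gₖ⟫` to be integrable: `Gₖ ∈ L^(1+γ)` forces
`wₖ ∈ L^(1+γ)`, hence `∇f wₖ ∈ L^((1+γ)/γ)`, and Hölder's inequality for the conjugate exponents
`(1+γ)/γ` and `1+γ` applies.
-/

open MeasureTheory Finset
open scoped ENNReal RealInnerProductSpace

theorem Finset.card_mul_inf'_le_sum {ι α : Type*} [Semiring α] [LinearOrder α]
    [IsOrderedAddMonoid α] (s : Finset ι) (hs : s.Nonempty) (f : ι → α) :
    s.card * s.inf' hs f ≤ ∑ i ∈ s, f i := by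
  simpa using card_nsmul_le_sum s f _ fun i hi => inf'_le f hi

theorem rpow_div_mul_rpow_div_of_add_eq {x a b r : ℝ} (hx : 0 < x) (hr : r ≠ 0) (h : a + b = r) :
    x ^ (a / r) * x ^ (b / r) = x := by
  rw [← Real.rpow_add hx, ← add_div, h, div_self hr, Real.rpow_one]

section LpBounds

variable {Ω E F : Type*} {m0 : MeasurableSpace Ω} {μ : Measure Ω}
  [NormedAddCommGroup E] [NormedAddCommGroup F] {g : E → F} {M γ : ℝ}

theorem continuous_of_norm_sub_le_mul_rpow (hγ : 0 < γ)
    (hg : ∀ x y, ‖g x - g y‖ ≤ M * ‖x - y‖ ^ γ) : Continuous g := by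
  refine continuous_iff_continuousAt.2 fun x₀ => tendsto_iff_norm_sub_tendsto_zero.2 ?_
  refine squeeze_zero (fun _ => norm_nonneg _) (fun x => hg x x₀) ?_
  have hcont : Continuous fun x => M * ‖x - x₀‖ ^ γ :=
    continuous_const.mul ((continuous_id.sub continuous_const).norm.rpow_const
      fun _ => Or.inr hγ.le)
  simpa [Real.zero_rpow hγ.ne'] using hcont.tendsto x₀

variable [IsFiniteMeasure μ]

theorem MeasureTheory.MemLp.comp_of_norm_sub_le_mul_rpow {p : ℝ≥0∞} (hγ : 0 < γ)
    (hg : ∀ x y, ‖g x - g y‖ ≤ M * ‖x - y‖ ^ γ) {X : Ω → E} (hX : MemLp X p μ) :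
    MemLp (fun ω => g (X ω)) (p / ENNReal.ofReal γ) μ := by
  have hbound : MemLp (fun ω => ‖g 0‖ + M * ‖X ω‖ ^ γ) (p / ENNReal.ofReal γ) μ := by
    have hXγ := hX.norm_rpow_div (ENNReal.ofReal γ)
    rw [ENNReal.toReal_ofReal hγ.le] at hXγ
    exact (memLp_const (‖g 0‖)).add (hXγ.const_mul M)
  refine hbound.of_le ((continuous_of_norm_sub_le_mul_rpow hγ hg).comp_aestronglyMeasurable hX.1)
    (ae_of_all _ fun ω => ?_)
  calc ‖g (X ω)‖ ≤ ‖g 0‖ + ‖g (X ω) - g 0‖ := norm_le_insert' _ _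
    _ ≤ ‖g 0‖ + M * ‖X ω‖ ^ γ := by simpa using hg (X ω) 0
    _ ≤ ‖‖g 0‖ + M * ‖X ω‖ ^ γ‖ := Real.le_norm_self _

theorem memLp_of_sgd_iterate [NormedSpace ℝ E] {p : ℝ≥0∞} {η : ℝ} {w G : ℕ → Ω → E} {w0 : E}
    (hw0 : w 0 = fun _ => w0) (hiter : ∀ k, w (k + 1) = fun ω => w k ω - η • G k ω)
    (hG : ∀ k, MemLp (G k) p μ) : ∀ k, MemLp (w k) p μ
  | 0 => hw0 ▸ memLp_const w0
  | k + 1 => hiter k ▸ (memLp_of_sgd_iterate hw0 hiter hG k).sub ((hG k).const_smul η)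

end LpBounds

section Descent

variable {E : Type*} [NormedAddCommGroup E] [InnerProductSpace ℝ E] [CompleteSpace E]
  {f : E → ℝ} {M γ : ℝ}

theorem hasDerivAt_comp_add_smul (hf : Differentiable ℝ f) (x v : E) (t : ℝ) :
    HasDerivAt (fun s : ℝ => f (x + s • v)) ⟪gradient f (x + t • v), v⟫ t := by
  have hline : HasDerivAt (fun s : ℝ => x + s • v) v t := by
    simpa using ((hasDerivAt_id t).smul_const v).const_add x
  exact (hf (x + t • v)).hasGradientAt.hasFDerivAt.comp_hasDerivAt t hline

theorem le_add_inner_gradient_add_rpow (hf : Differentiable ℝ f) (hγ : 0 < γ)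
    (hgrad : ∀ x y, ‖gradient f x - gradient f y‖ ≤ M * ‖x - y‖ ^ γ) (x v : E) :
    f (x + v) ≤ f x + ⟪gradient f x, v⟫ + M / (1 + γ) * ‖v‖ ^ (1 + γ) := by
  set c := M * ‖v‖ ^ (1 + γ) with hc
  set φ : ℝ → ℝ := fun t => f (x + t • v) - t * ⟪gradient f x, v⟫ - c * t ^ (1 + γ) / (1 + γ)
  have hφ : ∀ t, HasDerivAt φ (⟪gradient f (x + t • v), v⟫ - ⟪gradient f x, v⟫ - c * t ^ γ) t := by
    intro t
    have hpow := ((Real.hasDerivAt_rpow_const (x := t) (p := 1 + γ)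
      (Or.inr (by linarith))).const_mul c).div_const (1 + γ)
    refine (((hasDerivAt_comp_add_smul hf x v t).sub ((hasDerivAt_id t).mul_const _)).sub
      hpow).congr_deriv ?_
    rw [add_sub_cancel_left]
    field_simp
  have hφ' : ∀ t ∈ interior (Set.Icc (0 : ℝ) 1),
      ⟪gradient f (x + t • v), v⟫ - ⟪gradient f x, v⟫ - c * t ^ γ ≤ 0 := by
    intro t ht
    rw [interior_Icc] at ht
    rw [← inner_sub_left, sub_nonpos]
    calc ⟪gradient f (x + t • v) - gradient f x, v⟫
        ≤ ‖gradient f (x + t • v) - gradient f x‖ * ‖v‖ := real_inner_le_norm _ _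
      _ ≤ M * ‖t • v‖ ^ γ * ‖v‖ := by
          simpa using mul_le_mul_of_nonneg_right (hgrad (x + t • v) x) (norm_nonneg v)
      _ = c * t ^ γ := by
          rw [norm_smul, Real.norm_of_nonneg ht.1.le, Real.mul_rpow ht.1.le (norm_nonneg v), hc,
            Real.rpow_add' (norm_nonneg v) (by linarith), Real.rpow_one]
          ring
  have hanti : AntitoneOn φ (Set.Icc 0 1) :=
    antitoneOn_of_hasDerivWithinAt_nonpos (convex_Icc 0 1)
      (fun t _ => (hφ t).continuousAt.continuousWithinAt)
      (fun t _ => (hφ t).hasDerivWithinAt) hφ'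
  have h01 := hanti (by simp) (by simp) zero_le_one
  simp only [φ, zero_smul, one_smul, add_zero, Real.zero_rpow (by linarith : 1 + γ ≠ 0),
    Real.one_rpow, one_mul, mul_one, zero_mul, mul_zero, zero_div, sub_zero] at h01
  linarith [show c / (1 + γ) = M / (1 + γ) * ‖v‖ ^ (1 + γ) by ring]

theorem le_sub_sum_inner_gradient_add_sum_rpow (hf : Differentiable ℝ f) (hγ : 0 < γ)
    (hgrad : ∀ x y, ‖gradient f x - gradient f y‖ ≤ M * ‖x - y‖ ^ γ) {η : ℝ} (hη : 0 ≤ η)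
    {w G : ℕ → E} (hw : ∀ k, w (k + 1) = w k - η • G k) (n : ℕ) :
    f (w n) ≤ f (w 0) - η * ∑ k ∈ range n, ⟪gradient f (w k), G k⟫
      + M * η ^ (1 + γ) / (1 + γ) * ∑ k ∈ range n, ‖G k‖ ^ (1 + γ) := by
  induction n with
  | zero => simp
  | succ n ih =>
    have hstep := le_add_inner_gradient_add_rpow hf hγ hgrad (w n) (-(η • G n))
    rw [← sub_eq_add_neg, ← hw, inner_neg_right, inner_smul_right, norm_neg,
      norm_smul, Real.norm_of_nonneg hη, Real.mul_rpow hη (norm_nonneg _)] at hstep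
    rw [sum_range_succ, sum_range_succ]
    linear_combination ih + hstep

end Descent

section Expectation

variable {Ω E F : Type*} {m m0 : MeasurableSpace Ω} {μ : Measure Ω}
  [NormedAddCommGroup E] [InnerProductSpace ℝ E]

theorem integral_inner_eq_integral_norm_sq_of_condExp_ae_eq [CompleteSpace E] [IsFiniteMeasure μ]
    (hm : m ≤ m0) {V G : Ω → E} (hV : StronglyMeasurable[m] V) (hG : Integrable G μ)
    (hVG : Integrable (fun ω => ⟪V ω, G ω⟫) μ) (hcond : μ[G|m] =ᵐ[μ] V) :
    ∫ ω, ⟪V ω, G ω⟫ ∂μ = ∫ ω, ‖V ω‖ ^ 2 ∂μ := by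
  have hpull : μ[fun ω => ⟪V ω, G ω⟫|m] =ᵐ[μ] fun ω => ⟪V ω, μ[G|m] ω⟫ :=
    condExp_bilin_of_stronglyMeasurable_left (innerSL ℝ) hV hVG hG
  calc ∫ ω, ⟪V ω, G ω⟫ ∂μ = ∫ ω, (μ[fun ω => ⟪V ω, G ω⟫|m]) ω ∂μ := (integral_condExp hm).symm
    _ = ∫ ω, ‖V ω‖ ^ 2 ∂μ := integral_congr_ae <| by
        filter_upwards [hpull, hcond] with ω h1 h2
        rw [h1, h2, real_inner_self_eq_norm_sq]

theorem integral_le_of_condExp_le [IsProbabilityMeasure μ] (hm : m ≤ m0) {g : Ω → ℝ} {c : ℝ}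
    (hc : ∀ᵐ ω ∂μ, (μ[g|m]) ω ≤ c) : ∫ ω, g ω ∂μ ≤ c := by
  rw [← integral_condExp hm]
  calc ∫ ω, (μ[g|m]) ω ∂μ ≤ ∫ _, c ∂μ := integral_mono_ae integrable_condExp (integrable_const c) hc
    _ = c := by simp

variable [NormedAddCommGroup F] [IsFiniteMeasure μ] {g : F → E} {M γ : ℝ}

theorem integrable_inner_comp_of_memLp (hγ : 0 < γ)
    (hg : ∀ x y, ‖g x - g y‖ ≤ M * ‖x - y‖ ^ γ) {X : Ω → F} {G : Ω → E}
    (hX : MemLp X (ENNReal.ofReal (1 + γ)) μ) (hG : MemLp G (ENNReal.ofReal (1 + γ)) μ) :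
    Integrable (fun ω => ⟪g (X ω), G ω⟫) μ := by
  have hgX : MemLp (fun ω => g (X ω)) (ENNReal.ofReal ((1 + γ) / γ)) μ := by
    rw [ENNReal.ofReal_div_of_pos hγ]
    exact hX.comp_of_norm_sub_le_mul_rpow hγ hg
  have : ENNReal.HolderConjugate (ENNReal.ofReal ((1 + γ) / γ)) (ENNReal.ofReal (1 + γ)) :=
    Real.HolderConjugate.ennrealOfReal <| Real.holderConjugate_iff.2
      ⟨(one_lt_div hγ).2 (by linarith), by field_simp; ring⟩
  rw [← memLp_one_iff_integrable]
  exact hgX.of_bilin (fun a b => ⟪a, b⟫) 1 hG (hgX.1.inner hG.1)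
    (ae_of_all _ fun ω => by simpa using nnnorm_inner_le_nnnorm _ _)

end Expectation

theorem sgd_mul_sum_integral_norm_gradient_sq_le
    {E : Type*} [NormedAddCommGroup E] [InnerProductSpace ℝ E] [CompleteSpace E]
    {Ω : Type*} [m0 : MeasurableSpace Ω] {μ : Measure Ω} [IsProbabilityMeasure μ]
    {ℱ : ℕ → MeasurableSpace Ω} (hℱ : ∀ k, ℱ k ≤ m0)
    {f : E → ℝ} (hf : Differentiable ℝ f) {fstar : ℝ} (hfbdd : ∀ x, fstar ≤ f x)
    {γ M σ η : ℝ} (hγ0 : 0 < γ) (hM : 0 ≤ M) (hη : 0 < η)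
    (hgrad : ∀ x y, ‖gradient f x - gradient f y‖ ≤ M * ‖x - y‖ ^ γ)
    {w G : ℕ → Ω → E} {w0 : E} (hw0 : w 0 = fun _ => w0)
    (hiter : ∀ k, w (k + 1) = fun ω => w k ω - η • G k ω)
    (hadapted : ∀ k, StronglyMeasurable[ℱ k] (w k))
    (hGint : ∀ k, Integrable (G k) μ)
    (hGmoment_int : ∀ k, Integrable (fun ω => ‖G k ω‖ ^ (1 + γ)) μ)
    (hunbiased : ∀ k, μ[G k | ℱ k] =ᵐ[μ] fun ω => gradient f (w k ω))
    (hmoment : ∀ k, ∀ᵐ ω ∂μ, (μ[fun ω' => ‖G k ω'‖ ^ (1 + γ) | ℱ k]) ω ≤ σ ^ (1 + γ))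
    (K : ℕ) :
    η * ∑ k ∈ range K, ∫ ω, ‖gradient f (w k ω)‖ ^ 2 ∂μ
      ≤ f w0 - fstar + M * η ^ (1 + γ) / (1 + γ) * (K * σ ^ (1 + γ)) := by
  have hGLp : ∀ k, MemLp (G k) (ENNReal.ofReal (1 + γ)) μ := fun k =>
    (integrable_norm_rpow_iff (hGint k).1 (by simp; linarith) ENNReal.ofReal_ne_top).1
      (by rw [ENNReal.toReal_ofReal (by linarith)]; exact hGmoment_int k)
  have hwLp := memLp_of_sgd_iterate hw0 hiter hGLp
  have hinner k := integrable_inner_comp_of_memLp hγ0 hgrad (hwLp k) (hGLp k)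
  have hinner_eq k : ∫ ω, ⟪gradient f (w k ω), G k ω⟫ ∂μ = ∫ ω, ‖gradient f (w k ω)‖ ^ 2 ∂μ :=
    integral_inner_eq_integral_norm_sq_of_condExp_ae_eq (hℱ k)
      ((continuous_of_norm_sub_le_mul_rpow hγ0 hgrad).comp_stronglyMeasurable (hadapted k))
      (hGint k) (hinner k) (hunbiased k)
  have hpath ω : η * ∑ k ∈ range K, ⟪gradient f (w k ω), G k ω⟫
      ≤ f w0 - fstar + M * η ^ (1 + γ) / (1 + γ) * ∑ k ∈ range K, ‖G k ω‖ ^ (1 + γ) := by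
    have := le_sub_sum_inner_gradient_add_sum_rpow hf hγ0 hgrad hη.le
      (w := fun k => w k ω) (fun k => congrFun (hiter k) ω) K
    simp only [hw0] at this
    linarith [hfbdd (w K ω)]
  calc η * ∑ k ∈ range K, ∫ ω, ‖gradient f (w k ω)‖ ^ 2 ∂μ
      = ∫ ω, η * ∑ k ∈ range K, ⟪gradient f (w k ω), G k ω⟫ ∂μ := by
        rw [integral_const_mul, integral_finsetSum _ fun k _ => hinner k]
        simp only [hinner_eq]
    _ ≤ ∫ ω, (f w0 - fstar + M * η ^ (1 + γ) / (1 + γ) * ∑ k ∈ range K, ‖G k ω‖ ^ (1 + γ)) ∂μ :=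
        integral_mono ((integrable_finsetSum _ fun k _ => hinner k).const_mul η)
          ((integrable_const _).add
            ((integrable_finsetSum _ fun k _ => hGmoment_int k).const_mul _)) hpath
    _ = f w0 - fstar + M * η ^ (1 + γ) / (1 + γ) * ∑ k ∈ range K, ∫ ω, ‖G k ω‖ ^ (1 + γ) ∂μ := by
        rw [integral_add (integrable_const _)
            ((integrable_finsetSum _ fun k _ => hGmoment_int k).const_mul _),
          integral_const, integral_const_mul, integral_finsetSum _ fun k _ => hGmoment_int k]
        simp
    _ ≤ f w0 - fstar + M * η ^ (1 + γ) / (1 + γ) * (K * σ ^ (1 + γ)) := by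
        gcongr
        simpa using sum_le_card_nsmul (range K) _ _
            fun k _ => integral_le_of_condExp_le (hℱ k) (hmoment k)

theorem sgd_bound_le_of_stepsize_eq {γ M σ Δ η : ℝ} {K : ℕ} (hK : 0 < K) (hγ0 : 0 < γ) (hγ1 : γ ≤ 1)
    (hM : 0 < M) (hσ : 0 < σ) (hΔ : 0 < Δ)
    (hη : η = 1 / σ * ((1 + γ) * Δ / (γ * M)) ^ (1 / (1 + γ)) / (K : ℝ) ^ (1 / (1 + γ))) :
    (Δ + M * η ^ (1 + γ) / (1 + γ) * (K * σ ^ (1 + γ))) / (η * K)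
      ≤ σ * ((1 + γ) / γ * M) ^ (1 / (1 + γ)) * Δ ^ (γ / (1 + γ)) / (K : ℝ) ^ (γ / (1 + γ)) := by
  generalize hr : 1 + γ = r at hη ⊢
  have hr0 : 0 < r := by linarith
  generalize hB : r * Δ / (γ * M) = B at hη
  have hB0 : 0 < B := by rw [← hB]; positivity
  have hK0 : (0 : ℝ) < K := Nat.cast_pos.2 hK
  have hηr : η ^ r = B / (σ ^ r * K) := by
    rw [hη, one_div_mul_eq_div, div_div, Real.div_rpow (by positivity) (by positivity),
      Real.mul_rpow hσ.le (by positivity), ← Real.rpow_mul hB0.le, ← Real.rpow_mul hK0.le,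
      one_div_mul_cancel hr0.ne', Real.rpow_one, Real.rpow_one]
  have hsplitB := rpow_div_mul_rpow_div_of_add_eq hB0 hr0.ne' hr
  have hsplitK := rpow_div_mul_rpow_div_of_add_eq hK0 hr0.ne' hr
  have hsplitM := rpow_div_mul_rpow_div_of_add_eq hM hr0.ne' hr
  have hMB : M * B = r / γ * Δ := by rw [← hB]; field_simp
  calc (Δ + M * η ^ r / r * (K * σ ^ r)) / (η * K)
      = M * (B ^ (1 / r) * B ^ (γ / r))
          / (1 / σ * B ^ (1 / r) / K ^ (1 / r) * (K ^ (1 / r) * K ^ (γ / r))) := by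
        rw [hsplitB, hsplitK, ← hη, hηr]
        congr 1
        field_simp
        rw [hMB, ← hr]
        field_simp
        ring
    _ = σ * M * B ^ (γ / r) / (K : ℝ) ^ (γ / r) := by
        field_simp
    _ = σ * M ^ (1 / r) * (r / γ * Δ) ^ (γ / r) / (K : ℝ) ^ (γ / r) := by
        rw [← hMB, Real.mul_rpow hM.le hB0.le]
        nth_rewrite 1 [← hsplitM]
        ring
    _ ≤ σ * (r / γ * M) ^ (1 / r) * Δ ^ (γ / r) / (K : ℝ) ^ (γ / r) := by
        rw [Real.mul_rpow (by positivity) hM.le, Real.mul_rpow (by positivity) hΔ.le]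
        have hexp : (r / γ) ^ (γ / r) ≤ (r / γ) ^ (1 / r) :=
          Real.rpow_le_rpow_of_exponent_le ((one_le_div hγ0).2 (by linarith))
            (div_le_div_of_nonneg_right hγ1 hr0.le)
        calc σ * M ^ (1 / r) * ((r / γ) ^ (γ / r) * Δ ^ (γ / r)) / (K : ℝ) ^ (γ / r)
            = σ * M ^ (1 / r) * Δ ^ (γ / r) / (K : ℝ) ^ (γ / r) * (r / γ) ^ (γ / r) := by ring
          _ ≤ σ * M ^ (1 / r) * Δ ^ (γ / r) / (K : ℝ) ^ (γ / r) * (r / γ) ^ (1 / r) := by gcongr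
          _ = σ * ((r / γ) ^ (1 / r) * M ^ (1 / r)) * Δ ^ (γ / r) / (K : ℝ) ^ (γ / r) := by ring

theorem stmt_4_general (d K : ℕ) (hK : 0 < K)
    {Ω : Type*} [m0 : MeasurableSpace Ω] (μ : Measure Ω) [IsProbabilityMeasure μ]
    (ℱ : ℕ → MeasurableSpace Ω) (hℱ : ∀ k, ℱ k ≤ m0)
    (f : EuclideanSpace ℝ (Fin d) → ℝ) (hf : Differentiable ℝ f)
    (fstar : ℝ) (hfbdd : ∀ x, fstar ≤ f x)
    (γ M σ η : ℝ) (hγ0 : 0 < γ) (hγ1 : γ ≤ 1) (hM : 0 < M) (hσ : 0 < σ)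
    (hHolder : ∀ x y : EuclideanSpace ℝ (Fin d),
      ‖gradient f x - gradient f y‖ ≤ M * ‖x - y‖ ^ γ)
    (w G : ℕ → Ω → EuclideanSpace ℝ (Fin d))
    (w0 : EuclideanSpace ℝ (Fin d)) (hw0 : w 0 = fun _ => w0)
    (hgap : fstar < f w0)
    (cγ : ℝ)
    (hcγ : cγ = (1 / σ) * ((1 + γ) * (f w0 - fstar) / (γ * M)) ^ (1 / (1 + γ)))
    (hη : η = cγ / (K : ℝ) ^ (1 / (1 + γ)))
    (hiter : ∀ k, w (k + 1) = fun ω => w k ω - η • G k ω)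
    (hadapted : ∀ k, StronglyMeasurable[ℱ k] (w k))
    (hGint : ∀ k, Integrable (G k) μ)
    (hGmoment_int : ∀ k, Integrable (fun ω => ‖G k ω‖ ^ (1 + γ)) μ)
    (hunbiased : ∀ k, μ[G k | ℱ k] =ᵐ[μ] fun ω => gradient f (w k ω))
    (hmoment : ∀ k, ∀ᵐ ω ∂μ,
      (μ[fun ω' => ‖G k ω'‖ ^ (1 + γ) | ℱ k]) ω ≤ σ ^ (1 + γ)) :
    (Finset.range K).inf' (Finset.nonempty_range_iff.mpr hK.ne')
        (fun k => ∫ ω, ‖gradient f (w k ω)‖ ^ 2 ∂μ)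
      ≤ (σ * (((1 + γ) / γ) * M) ^ (1 / (1 + γ)) * (f w0 - fstar) ^ (γ / (1 + γ)))
          / (K : ℝ) ^ (γ / (1 + γ)) := by
  have hΔ : 0 < f w0 - fstar := sub_pos.2 hgap
  have hη0 : 0 < η := by
    have hB : 0 < (1 + γ) * (f w0 - fstar) / (γ * M) := by positivity
    rw [hη, hcγ]
    positivity
  have hK0 : (0 : ℝ) < K := Nat.cast_pos.2 hK
  have hsum := sgd_mul_sum_integral_norm_gradient_sq_le hℱ hf hfbdd hγ0 hM.le hη0 hHolder hw0
    hiter hadapted hGint hGmoment_int hunbiased hmoment K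
  have hmin : (K : ℝ) * (Finset.range K).inf' (Finset.nonempty_range_iff.mpr hK.ne')
        (fun k => ∫ ω, ‖gradient f (w k ω)‖ ^ 2 ∂μ)
      ≤ ∑ k ∈ range K, ∫ ω, ‖gradient f (w k ω)‖ ^ 2 ∂μ := by
    simpa using card_mul_inf'_le_sum (range K) _ fun k => ∫ ω, ‖gradient f (w k ω)‖ ^ 2 ∂μ
  calc _ ≤ (f w0 - fstar + M * η ^ (1 + γ) / (1 + γ) * (K * σ ^ (1 + γ))) / (η * K) := by
        rw [le_div_iff₀ (mul_pos hη0 hK0)]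
        linarith [mul_le_mul_of_nonneg_left hmin hη0.le]
    _ ≤ _ := sgd_bound_le_of_stepsize_eq hK hγ0 hγ1 hM hσ hΔ (by rw [hη, hcγ])

theorem stmt_4 (d K : ℕ) (hd : 0 < d) (hK : 0 < K)
    {Ω : Type*} [m0 : MeasurableSpace Ω] (μ : Measure Ω) [IsProbabilityMeasure μ]
    (ℱ : ℕ → MeasurableSpace Ω) (hℱ : ∀ k, ℱ k ≤ m0)
    (f : EuclideanSpace ℝ (Fin d) → ℝ) (hf : Differentiable ℝ f)
    (fstar : ℝ) (hfbdd : ∀ x, fstar ≤ f x)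
    (γ M σ η : ℝ) (hγ0 : 0 < γ) (hγ1 : γ ≤ 1) (hM : 0 < M) (hσ : 0 < σ)
    (hHolder : ∀ x y : EuclideanSpace ℝ (Fin d),
      ‖gradient f x - gradient f y‖ ≤ M * ‖x - y‖ ^ γ)
    (w G : ℕ → Ω → EuclideanSpace ℝ (Fin d))
    (w0 : EuclideanSpace ℝ (Fin d)) (hw0 : w 0 = fun _ => w0)
    (hgap : fstar < f w0)
    (cγ : ℝ)
    (hcγ : cγ = (1 / σ) * ((1 + γ) * (f w0 - fstar) / (γ * M)) ^ (1 / (1 + γ)))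
    (hη : η = cγ / (K : ℝ) ^ (1 / (1 + γ)))
    (hiter : ∀ k, w (k + 1) = fun ω => w k ω - η • G k ω)
    (hadapted : ∀ k, StronglyMeasurable[ℱ k] (w k))
    (hGint : ∀ k, Integrable (G k) μ)
    (hGmoment_int : ∀ k, Integrable (fun ω => ‖G k ω‖ ^ (1 + γ)) μ)
    (hunbiased : ∀ k, μ[G k | ℱ k] =ᵐ[μ] fun ω => gradient f (w k ω))
    (hmoment : ∀ k, ∀ᵐ ω ∂μ,
      (μ[fun ω' => ‖G k ω'‖ ^ (1 + γ) | ℱ k]) ω ≤ σ ^ (1 + γ)) :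
    (Finset.range K).inf' (Finset.nonempty_range_iff.mpr hK.ne')
        (fun k => ∫ ω, ‖gradient f (w k ω)‖ ^ 2 ∂μ)
      ≤ (σ * (((1 + γ) / γ) * M) ^ (1 / (1 + γ)) * (f w0 - fstar) ^ (γ / (1 + γ)))
          / (K : ℝ) ^ (γ / (1 + γ)) :=
  stmt_4_general d K hK (m0 := m0) μ ℱ hℱ f hf fstar hfbdd γ M σ η hγ0 hγ1 hM hσ hHolder w G w0 hw0
    hgap cγ hcγ hη hiter hadapted hGint hGmoment_int hunbiased hmoment
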